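/- For all reals a, b > -1, every integer n ≥ 1, and every x ∈ [0,1], ∫₀^x (1-s)^a s^b G_n^{(a,b)}(s) ds = -(1/n) · (1-x)^{a+1} x^{b+1} G_{n-1}^{(a+1,b+1)}(x). -/

import Mathlib

open Real MeasureTheory

/-- Jacobi polynomial `P_n^{(a,b)}(x)`. -/
noncomputable def jacobiP (a b : ℝ) (n : ℕ) (x : ℝ) : ℝ :=
  ∑ m ∈ Finset.range (n + 1),
    (1 / 2 ^ n : ℝ) *
      (Real.Gamma ((n : ℝ) + a + 1) /
        (Real.Gamma ((m : ℝ) + 1) * Real.Gamma ((n : ℝ) + a - (m : ℝ) + 1))) *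
      (Real.Gamma ((n : ℝ) + b + 1) /
        (Real.Gamma ((n : ℝ) - (m : ℝ) + 1) * Real.Gamma (b + (m : ℝ) + 1))) *
      (x - 1) ^ (n - m) * (x + 1) ^ m

/-- Shifted Jacobi polynomial `G_n^{(a,b)}(t) = P_n^{(a,b)}(2t-1)`. -/
noncomputable def jacobiG (a b : ℝ) (n : ℕ) (t : ℝ) : ℝ :=
  jacobiP a b n (2 * t - 1)

noncomputable def dd (a b ν k : ℝ) : ℝ :=
  Real.Gamma (ν + a + 1) / (Real.Gamma (k + 1) * Real.Gamma (ν + a - k + 1)) *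
    (Real.Gamma (ν + b + 1) / (Real.Gamma (ν - k + 1) * Real.Gamma (b + k + 1)))

lemma jacobiG_eq_sum (a b : ℝ) (n : ℕ) (t : ℝ) :
    jacobiG a b n t = ∑ m ∈ Finset.range (n + 1), dd a b n m * ((t - 1) ^ (n - m) * t ^ m) := by
  unfold jacobiG jacobiP dd
  apply Finset.sum_congr rfl
  intro m hm
  have hm' : m ≤ n := Nat.lt_succ_iff.mp (Finset.mem_range.mp hm)
  rw [show (2*t - 1 - 1) = 2*(t-1) by ring, show (2*t - 1 + 1) = 2*t by ring,
    mul_pow, mul_pow]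
  have h2 : (2:ℝ)^(n-m) * 2^m = 2^n := by rw [← pow_add]; congr 1; omega
  have h2n : (2:ℝ)^n ≠ 0 := by positivity
  rw [show ∀ Ca Cb p q : ℝ, 1/2^n * Ca * Cb * ((2:ℝ)^(n-m)*p) * (2^m*q)
      = (2^(n-m)*2^m/2^n) * (Ca * Cb * (p*q)) from by intros; ring]
  rw [h2, div_self h2n, one_mul]

lemma continuous_jacobiG (a b : ℝ) (n : ℕ) : Continuous (jacobiG a b n) := by
  unfold jacobiG jacobiP
  apply continuous_finset_sum
  intro i _
  fun_prop

lemma coeff1 (a b ν k : ℝ) (hk1 : 0 < k + 1) (h1 : 0 < ν + a - k) (hνk : 0 < ν - k)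
    (h3 : 0 < b + k + 2) :
    dd (a+1) (b+1) (ν-1) k * (ν + a - k) = (k + 1) * dd a b ν (k+1) := by
  unfold dd
  rw [show ν - 1 + (a+1) + 1 = ν + a + 1 by ring,
    show ν - 1 + (a+1) - k + 1 = (ν + a - k) + 1 by ring,
    show ν - 1 + (b+1) + 1 = ν + b + 1 by ring,
    show ν - 1 - k + 1 = ν - k by ring,
    show b + 1 + k + 1 = b + k + 2 by ring,
    show ν + a - (k+1) + 1 = ν + a - k by ring,
    show ν - (k+1) + 1 = ν - k by ring,
    show b + (k+1) + 1 = b + k + 2 by ring,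
    show k + 1 + 1 = (k+1) + 1 by ring,
    Real.Gamma_add_one (ne_of_gt h1), Real.Gamma_add_one (ne_of_gt hk1)]
  have g1 : Real.Gamma (k+1) ≠ 0 := ne_of_gt (Real.Gamma_pos_of_pos hk1)
  have g2 : Real.Gamma (ν+a-k) ≠ 0 := ne_of_gt (Real.Gamma_pos_of_pos h1)
  have g3 : Real.Gamma (ν-k) ≠ 0 := ne_of_gt (Real.Gamma_pos_of_pos hνk)
  have g4 : Real.Gamma (b+k+2) ≠ 0 := ne_of_gt (Real.Gamma_pos_of_pos h3)
  field_simp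

lemma coeff2 (a b ν k : ℝ) (hk1 : 0 < k + 1) (hνk : 0 < ν - k) (h1 : 0 < ν + a - k + 1)
    (h3 : 0 < b + k + 1) :
    dd (a+1) (b+1) (ν-1) k * (b + 1 + k) = (ν - k) * dd a b ν k := by
  unfold dd
  rw [show ν - 1 + (a+1) + 1 = ν + a + 1 by ring,
    show ν - 1 + (a+1) - k + 1 = ν + a - k + 1 by ring,
    show ν - 1 + (b+1) + 1 = ν + b + 1 by ring,
    show ν - 1 - k + 1 = ν - k by ring,
    show b + 1 + k + 1 = (b + k + 1) + 1 by ring,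
    show ν - k + 1 = (ν - k) + 1 by ring,
    Real.Gamma_add_one (ne_of_gt h3), Real.Gamma_add_one (ne_of_gt hνk)]
  have g1 : Real.Gamma (k+1) ≠ 0 := ne_of_gt (Real.Gamma_pos_of_pos hk1)
  have g2 : Real.Gamma (ν+a-k+1) ≠ 0 := ne_of_gt (Real.Gamma_pos_of_pos h1)
  have g3 : Real.Gamma (ν-k) ≠ 0 := ne_of_gt (Real.Gamma_pos_of_pos hνk)
  have g4 : Real.Gamma (b+k+1) ≠ 0 := ne_of_gt (Real.Gamma_pos_of_pos h3)
  field_simp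
  ring

lemma hasDerivAt_term (A B x : ℝ) (hx0 : 0 < x) (hx1 : x < 1) :
    HasDerivAt (fun y : ℝ => (1 - y) ^ A * y ^ B)
      (B * ((1 - x) ^ A * x ^ (B - 1)) - A * ((1 - x) ^ (A - 1) * x ^ B)) x := by
  have h1 : HasDerivAt (fun y : ℝ => (1 - y) ^ A) (-(A * (1 - x) ^ (A - 1))) x := by
    have h := (Real.hasDerivAt_rpow_const (x := 1 - x) (p := A)
      (Or.inl (by intro h; linarith [h]))).comp x ((hasDerivAt_id x).const_sub 1)
    exact h.congr_deriv (by ring)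
  have h2 : HasDerivAt (fun y : ℝ => y ^ B) (B * x ^ (B - 1)) x :=
    Real.hasDerivAt_rpow_const (Or.inl (ne_of_gt hx0))
  have h := h1.mul h2
  exact h.congr_deriv (by ring)

lemma key_deriv (a b : ℝ) (ha : -1 < a) (hb : -1 < b) (n : ℕ) (hn : 1 ≤ n)
    (x : ℝ) (hx0 : 0 < x) (hx1 : x < 1) :
    HasDerivAt (fun y => -(1/(n:ℝ)) * (1-y)^(a+1) * y^(b+1) * jacobiG (a+1) (b+1) (n-1) y)
      ((1-x)^a * x^b * jacobiG a b n x) x := by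
  have h1x : 0 < 1 - x := by linarith
  set ν : ℝ := (n:ℝ) with hνdef
  have hν : ν ≠ 0 := Nat.cast_ne_zero.mpr (by omega)
  have hcast : ((n-1:ℕ):ℝ) = ν - 1 := by rw [Nat.cast_sub hn, Nat.cast_one]
  set c : ℕ → ℝ := fun m => dd (a+1) (b+1) (ν-1) m * (-1)^(n-1-m) with hcdef
  set Fs : ℝ → ℝ := fun y => ∑ m ∈ Finset.range n,
      c m * ((1-y)^(a+1+((n-1-m:ℕ):ℝ)) * y^(b+1+(m:ℝ))) with hFsdef
  -- step 1 : Fs has a derivative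
  have hFs : HasDerivAt Fs (∑ m ∈ Finset.range n,
      c m * ((b+1+(m:ℝ)) * ((1-x)^(a+1+((n-1-m:ℕ):ℝ)) * x^(b+1+(m:ℝ)-1))
        - (a+1+((n-1-m:ℕ):ℝ)) * ((1-x)^(a+1+((n-1-m:ℕ):ℝ)-1) * x^(b+1+(m:ℝ))))) x := by
    apply HasDerivAt.fun_sum
    intro m _
    exact (hasDerivAt_term _ _ x hx0 hx1).const_mul (c m)
  have hD := hFs.const_mul (-(1/ν))
  -- step 2 : restate the derivative value
  set E : ℕ → ℝ := fun k => (-1:ℝ)^(n-k) * ((1-x)^(a+((n-k:ℕ):ℝ)) * x^(b+(k:ℝ))) with hEdef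
  have hstep : ∀ m ∈ Finset.range n,
      c m * ((b+1+(m:ℝ)) * ((1-x)^(a+1+((n-1-m:ℕ):ℝ)) * x^(b+1+(m:ℝ)-1))
        - (a+1+((n-1-m:ℕ):ℝ)) * ((1-x)^(a+1+((n-1-m:ℕ):ℝ)-1) * x^(b+1+(m:ℝ))))
      = -(((m:ℝ)+1) * dd a b ν ((m:ℝ)+1) * E (m+1)) - (ν-(m:ℝ)) * dd a b ν (m:ℝ) * E m := by
    intro m hm
    have hmn : m < n := Finset.mem_range.mp hm
    have hmν : (m:ℝ) + 1 ≤ ν := by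
      have h' : ((m+1:ℕ):ℝ) ≤ (n:ℝ) := Nat.cast_le.mpr hmn
      push_cast at h'
      exact h'
    have hm0 : (0:ℝ) ≤ (m:ℝ) := Nat.cast_nonneg m
    have hA : ((n-1-m:ℕ):ℝ) = ν - 1 - (m:ℝ) := by
      rw [Nat.cast_sub (by omega : m ≤ n-1), hcast]
    have hB : ((n-m:ℕ):ℝ) = ν - (m:ℝ) := by rw [Nat.cast_sub (le_of_lt hmn)]
    have hc1 : dd (a+1) (b+1) (ν-1) (m:ℝ) * (ν + a - (m:ℝ)) = ((m:ℝ) + 1) * dd a b ν ((m:ℝ)+1) :=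
      coeff1 a b ν m (by positivity) (by linarith) (by linarith) (by linarith)
    have hc2 : dd (a+1) (b+1) (ν-1) (m:ℝ) * (b + 1 + (m:ℝ)) = (ν - (m:ℝ)) * dd a b ν (m:ℝ) :=
      coeff2 a b ν m (by positivity) (by linarith) (by linarith) (by linarith)
    simp only [hcdef, hEdef]
    rw [show n-(m+1) = n-1-m from by omega]
    rw [hA, hB]
    rw [show ((m+1:ℕ):ℝ) = (m:ℝ)+1 from by push_cast; ring]
    rw [show a+1+(ν-1-(m:ℝ)) = a+(ν-(m:ℝ)) from by ring]
    rw [show a+(ν-(m:ℝ))-1 = a+(ν-1-(m:ℝ)) from by ring]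
    rw [show b+1+(m:ℝ)-1 = b+(m:ℝ) from by ring]
    rw [show b+((m:ℝ)+1) = b+1+(m:ℝ) from by ring]
    rw [show n-m = (n-1-m)+1 from by omega, pow_succ]
    rw [← hc1, ← hc2]
    ring
  have hval : -(1/ν) * (∑ m ∈ Finset.range n,
      c m * ((b+1+(m:ℝ)) * ((1-x)^(a+1+((n-1-m:ℕ):ℝ)) * x^(b+1+(m:ℝ)-1))
        - (a+1+((n-1-m:ℕ):ℝ)) * ((1-x)^(a+1+((n-1-m:ℕ):ℝ)-1) * x^(b+1+(m:ℝ)))))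
      = (1-x)^a * x^b * jacobiG a b n x := by
    rw [Finset.sum_congr rfl hstep]
    have e1 : ∑ m ∈ Finset.range n, (((m:ℝ)+1) * dd a b ν ((m:ℝ)+1) * E (m+1))
        = ∑ k ∈ Finset.range (n+1), (k:ℝ) * dd a b ν (k:ℝ) * E k := by
      rw [Finset.sum_range_succ' (fun k => (k:ℝ) * dd a b ν (k:ℝ) * E k) n]
      simp
    have e2 : ∑ m ∈ Finset.range n, ((ν-(m:ℝ)) * dd a b ν (m:ℝ) * E m)
        = ∑ k ∈ Finset.range (n+1), (ν-(k:ℝ)) * dd a b ν (k:ℝ) * E k := by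
      rw [Finset.sum_range_succ]
      simp [hνdef]
    rw [Finset.sum_sub_distrib]
    rw [Finset.sum_neg_distrib, e1, e2]
    rw [show -(∑ k ∈ Finset.range (n+1), (k:ℝ) * dd a b ν (k:ℝ) * E k)
        - ∑ k ∈ Finset.range (n+1), (ν-(k:ℝ)) * dd a b ν (k:ℝ) * E k
        = -(∑ k ∈ Finset.range (n+1), ((k:ℝ) * dd a b ν (k:ℝ) * E k
            + (ν-(k:ℝ)) * dd a b ν (k:ℝ) * E k)) from by
      rw [Finset.sum_add_distrib]; ring]
    have e3 : ∑ k ∈ Finset.range (n+1), ((k:ℝ) * dd a b ν (k:ℝ) * E k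
        + (ν-(k:ℝ)) * dd a b ν (k:ℝ) * E k) = ν * ∑ k ∈ Finset.range (n+1), dd a b ν (k:ℝ) * E k := by
      rw [Finset.mul_sum]
      apply Finset.sum_congr rfl
      intro k _
      ring
    rw [e3]
    rw [show -(1/ν) * -(ν * ∑ k ∈ Finset.range (n+1), dd a b ν (k:ℝ) * E k)
        = ∑ k ∈ Finset.range (n+1), dd a b ν (k:ℝ) * E k from by field_simp]
    rw [jacobiG_eq_sum, Finset.mul_sum]
    apply Finset.sum_congr rfl
    intro k hk
    simp only [hEdef]
    rw [show (x-1)^(n-k) = (-1:ℝ)^(n-k) * (1-x)^(n-k) from by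
        rw [show x-(1:ℝ) = -1*(1-x) from by ring, mul_pow],
      Real.rpow_add h1x a ((n-k:ℕ):ℝ), Real.rpow_natCast,
      Real.rpow_add hx0 b (k:ℝ), Real.rpow_natCast]
    ring
  rw [hval] at hD
  apply hD.congr_of_eventuallyEq
  apply Filter.eventuallyEq_of_mem (isOpen_Ioo.mem_nhds (⟨hx0, hx1⟩ : x ∈ Set.Ioo (0:ℝ) 1))
  intro y hy
  have hy0 : (0:ℝ) < y := hy.1
  have hy1 : (0:ℝ) < 1 - y := by linarith [hy.2]
  simp only [hFsdef, hcdef]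
  rw [jacobiG_eq_sum, show (n-1)+1 = n from by omega, hcast, Finset.mul_sum, Finset.mul_sum]
  apply Finset.sum_congr rfl
  intro m hm
  rw [show (y-1)^(n-1-m) = (-1:ℝ)^(n-1-m) * (1-y)^(n-1-m) from by
      rw [show y-(1:ℝ) = -1*(1-y) from by ring, mul_pow],
    Real.rpow_add hy1 (a+1) ((n-1-m:ℕ):ℝ), Real.rpow_natCast,
    Real.rpow_add hy0 (b+1) (m:ℝ), Real.rpow_natCast]
  ring

lemma integrable01 (a b : ℝ) (ha : -1 < a) (hb : -1 < b) (n : ℕ) :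
    IntervalIntegrable (fun s => (1-s)^a * s^b * jacobiG a b n s) volume 0 1 := by
  have h1 : IntervalIntegrable (fun s => (1-s)^a * s^b * jacobiG a b n s) volume 0 (1/2) := by
    have hb' : IntervalIntegrable (fun s:ℝ => s^b) volume 0 (1/2) :=
      intervalIntegral.intervalIntegrable_rpow' hb
    have hcont : ContinuousOn (fun s:ℝ => (1-s)^a * jacobiG a b n s) (Set.uIcc 0 (1/2)) := by
      apply ContinuousOn.mul _ (continuous_jacobiG a b n).continuousOn
      intro s hs
      rw [Set.uIcc_of_le (by norm_num : (0:ℝ) ≤ 1/2)] at hs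
      apply ContinuousAt.continuousWithinAt
      exact (Real.continuousAt_rpow_const (1-s) a
        (Or.inl (by intro h; have := hs.2; norm_num at h ⊢; linarith))).comp
        ((continuous_const.sub continuous_id).continuousAt)
    have h := hb'.mul_continuousOn hcont
    have heq : (fun s => (1-s)^a * s^b * jacobiG a b n s)
        = fun s => s^b * ((1-s)^a * jacobiG a b n s) := by funext s; ring
    rw [heq]
    exact h
  have h2 : IntervalIntegrable (fun s => (1-s)^a * s^b * jacobiG a b n s) volume (1/2) 1 := by
    have ha' : IntervalIntegrable (fun s:ℝ => s^a) volume 0 (1/2) :=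
      intervalIntegral.intervalIntegrable_rpow' ha
    have ha'' : IntervalIntegrable (fun s:ℝ => (1-s)^a) volume (1/2) 1 := by
      have h := ha'.comp_sub_left 1
      norm_num at h
      exact h.symm
    have hcont : ContinuousOn (fun s:ℝ => s^b * jacobiG a b n s) (Set.uIcc (1/2) 1) := by
      apply ContinuousOn.mul _ (continuous_jacobiG a b n).continuousOn
      intro s hs
      rw [Set.uIcc_of_le (by norm_num : (1:ℝ)/2 ≤ 1)] at hs
      apply ContinuousAt.continuousWithinAt
      exact Real.continuousAt_rpow_const s b (Or.inl (by have := hs.1; intro h; rw [h] at this; norm_num at this))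
    have h := ha''.mul_continuousOn hcont
    have heq : (fun s => (1-s)^a * s^b * jacobiG a b n s)
        = fun s => (1-s)^a * (s^b * jacobiG a b n s) := by funext s; ring
    rw [heq]
    exact h
  exact h1.trans h2


/-- Antiderivative formula: `∫₀^x (1-s)^a s^b G_n^{(a,b)}(s) ds
  = -(1/n)(1-x)^{a+1} x^{b+1} G_{n-1}^{(a+1,b+1)}(x)`. -/
theorem jacobiG_integral (a b : ℝ) (ha : -1 < a) (hb : -1 < b)
    (n : ℕ) (hn : 1 ≤ n) (x : ℝ) (hx : x ∈ Set.Icc (0:ℝ) 1) :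
    (∫ s in (0:ℝ)..x, (1 - s) ^ a * s ^ b * jacobiG a b n s) =
      -(1 / (n : ℝ)) * (1 - x) ^ (a + 1) * x ^ (b + 1) * jacobiG (a + 1) (b + 1) (n - 1) x := by
  obtain ⟨hx0, hx1⟩ := hx
  set F : ℝ → ℝ := fun y => -(1/(n:ℝ)) * (1-y)^(a+1) * y^(b+1) * jacobiG (a+1) (b+1) (n-1) y
    with hFdef
  have hcF : Continuous F := by
    have c1 : Continuous fun y:ℝ => (1-y)^(a+1) := by
      apply continuous_iff_continuousAt.mpr
      intro y
      exact (Real.continuousAt_rpow_const (1-y) (a+1) (Or.inr (by linarith))).comp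
        ((continuous_const.sub continuous_id).continuousAt)
    have c2 : Continuous fun y:ℝ => y^(b+1) := by
      apply continuous_iff_continuousAt.mpr
      intro y
      exact Real.continuousAt_rpow_const y (b+1) (Or.inr (by linarith))
    exact ((continuous_const.mul c1).mul c2).mul (continuous_jacobiG _ _ _)
  have hint : IntervalIntegrable (fun s => (1-s)^a * s^b * jacobiG a b n s) volume 0 x := by
    apply (integrable01 a b ha hb n).mono_set
    rw [Set.uIcc_of_le hx0, Set.uIcc_of_le (by norm_num : (0:ℝ) ≤ 1)]
    exact Set.Icc_subset_Icc le_rfl hx1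
  have hder : ∀ y ∈ Set.Ioo 0 x, HasDerivWithinAt F ((1-y)^a * y^b * jacobiG a b n y)
      (Set.Ioi y) y := by
    intro y hy
    exact (key_deriv a b ha hb n hn y hy.1 (lt_of_lt_of_le hy.2 hx1)).hasDerivWithinAt
  have hFTC := intervalIntegral.integral_eq_sub_of_hasDeriv_right_of_le hx0
    hcF.continuousOn hder hint
  rw [hFTC]
  have hF0 : F 0 = 0 := by
    simp only [hFdef]
    rw [Real.zero_rpow (by linarith : b + 1 ≠ 0)]
    ring
  rw [hF0, sub_zero]
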